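/- arXiv:2102.00033 — 3 statements merged into one kernel-verified Lean document; each statement's English description precedes it below -/
import Mathlib

section
/- For the lattice x(s) = 𝔠₁q^{-s} + 𝔠₂q^s + 𝔠₃ and every nonnegative integer n, the x-average of the monomial z^n satisfies S_x z^n = α_n z^n + û_n z^{n-1} + (lower order terms), where û_n = n(α_{n-1} - α_n) 𝔠₃; i.e., the leading coefficient of S_x z^n is α_n and the next coefficient is û_n. -/
open Polynomial

noncomputable def alphaSeq (q : ℝ) (n : ℤ) : ℝ :=
  (q ^ ((n : ℝ) / 2) + q ^ (-(n : ℝ) / 2)) / 2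

noncomputable def gammaSeq (q : ℝ) (n : ℤ) : ℝ :=
  (q ^ ((n : ℝ) / 2) - q ^ (-(n : ℝ) / 2)) /
    (q ^ ((1 : ℝ) / 2) - q ^ (-(1 : ℝ) / 2))

noncomputable def latticeX (q : ℝ) (c1 c2 c3 : ℂ) (s : ℝ) : ℂ :=
  c1 * (q : ℂ) ^ (-(s : ℂ)) + c2 * (q : ℂ) ^ ((s : ℂ)) + c3

def IsDx (q : ℝ) (c1 c2 c3 : ℂ) (f Df : Polynomial ℂ) : Prop :=
  ∀ s : ℝ,
    Df.eval (latticeX q c1 c2 c3 s) *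
        (latticeX q c1 c2 c3 (s + 1 / 2) - latticeX q c1 c2 c3 (s - 1 / 2)) =
      f.eval (latticeX q c1 c2 c3 (s + 1 / 2)) - f.eval (latticeX q c1 c2 c3 (s - 1 / 2))

def IsSx (q : ℝ) (c1 c2 c3 : ℂ) (f Sf : Polynomial ℂ) : Prop :=
  ∀ s : ℝ,
    Sf.eval (latticeX q c1 c2 c3 s) =
      (f.eval (latticeX q c1 c2 c3 (s + 1 / 2)) + f.eval (latticeX q c1 c2 c3 (s - 1 / 2))) / 2

/-!
Write `x± = x(s ± 1/2)`. With `2α₁ = q^{1/2} + q^{-1/2}`, both `x₊ + x₋ = 2α₁ x(s) + 2𝔠₃(1 - α₁)`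
and `x₊ x₋ = x(s)² + 2𝔠₃(α₁ - 1) x(s) + κ` are polynomials in `x(s)`, so `x₊ⁿ + x₋ⁿ` is the
Lucas sequence `Vₙ` of these two polynomials evaluated at `x(s)`. As `x` takes infinitely many
values, `S_x zⁿ = Vₙ / 2`. The two top coefficients of `Vₙ` satisfy linear recurrences driven by
`α_{n+2} = 2α₁ α_{n+1} - α_n`, solved by `2α_n` and `2n(α_{n-1} - α_n)𝔠₃`; `κ` never reaches them.
-/

section LucasSequence

variable {R S : Type*} [CommRing R] [CommRing S]

def lucasV (P Q : R) : ℕ → R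
  | 0 => 2
  | 1 => P
  | n + 2 => P * lucasV P Q (n + 1) - Q * lucasV P Q n

theorem lucasV_add_mul (a b : R) (n : ℕ) : lucasV (a + b) (a * b) n = a ^ n + b ^ n := by
  induction n using Nat.twoStepInduction with
  | zero => simp [lucasV, one_add_one_eq_two]
  | one => simp [lucasV]
  | more n ih₀ ih₁ => rw [lucasV, ih₀, ih₁]; ring

theorem map_lucasV (f : R →+* S) (P Q : R) (n : ℕ) :
    f (lucasV P Q n) = lucasV (f P) (f Q) n := by
  induction n using Nat.twoStepInduction with
  | zero => simp [lucasV, map_ofNat]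
  | one => simp [lucasV]
  | more n ih₀ ih₁ => simp only [lucasV, map_sub, map_mul, ih₀, ih₁]

theorem natDegree_lucasV_le {P Q : R[X]} (hP : P.natDegree ≤ 1) (hQ : Q.natDegree ≤ 2)
    (n : ℕ) : (lucasV P Q n).natDegree ≤ n := by
  induction n using Nat.twoStepInduction with
  | zero => simp [lucasV, natDegree_ofNat]
  | one => simpa [lucasV] using hP
  | more n ih₀ ih₁ =>
    refine (natDegree_sub_le_of_le (natDegree_mul_le_of_le hP ih₁)
      (natDegree_mul_le_of_le hQ ih₀)).trans ?_
    omega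

end LucasSequence

section TopCoefficients

variable {R : Type*} [CommRing R]

theorem exists_degree_lt_eq_C_mul_X_pow_add_C_mul_X_pow_add {p : R[X]} {n : ℕ}
    (hp : p.natDegree ≤ n + 1) :
    ∃ r : R[X], r.degree < n ∧
      p = C (p.coeff (n + 1)) * X ^ (n + 1) + C (p.coeff n) * X ^ n + r := by
  refine ⟨p - (C (p.coeff (n + 1)) * X ^ (n + 1) + C (p.coeff n) * X ^ n), ?_, by ring⟩
  rw [degree_lt_iff_coeff_zero]
  intro m hm
  obtain rfl | rfl | hm' : m = n ∨ m = n + 1 ∨ n + 1 < m := by omega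
  · simp
  · simp
  · simp [coeff_eq_zero_of_natDegree_lt (hp.trans_lt hm'), hm'.ne',
      ((Nat.lt_succ_self n).trans hm').ne']

noncomputable def shiftSumPoly (a c : R) : R[X] := C (2 * a) * X + C (2 * c * (1 - a))

noncomputable def shiftProdPoly (a c κ : R) : R[X] := X ^ 2 + C (2 * c * (a - 1)) * X + C κ

theorem coeff_shiftSumPoly_zero (a c : R) : (shiftSumPoly a c).coeff 0 = 2 * c * (1 - a) := by
  simp only [shiftSumPoly, coeff_add, coeff_C_mul_X, coeff_C]
  simp

theorem coeff_shiftSumPoly_one (a c : R) : (shiftSumPoly a c).coeff 1 = 2 * a := by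
  simp only [shiftSumPoly, coeff_add, coeff_C_mul_X, coeff_C]
  simp

theorem coeff_shiftProdPoly_one (a c κ : R) : (shiftProdPoly a c κ).coeff 1 = 2 * c * (a - 1) := by
  simp only [shiftProdPoly, coeff_add, coeff_X_pow, coeff_C_mul_X, coeff_C]
  simp

theorem coeff_shiftSumPoly_mul (a c : R) (p : R[X]) (k : ℕ) :
    (shiftSumPoly a c * p).coeff (k + 1) =
      2 * a * p.coeff k + 2 * c * (1 - a) * p.coeff (k + 1) := by
  simp only [shiftSumPoly, add_mul, mul_assoc, coeff_add, coeff_C_mul, coeff_X_mul]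

theorem coeff_shiftProdPoly_mul (a c κ : R) (p : R[X]) (k : ℕ) :
    (shiftProdPoly a c κ * p).coeff (k + 2) =
      p.coeff k + 2 * c * (a - 1) * p.coeff (k + 1) + κ * p.coeff (k + 2) := by
  simp only [shiftProdPoly, add_mul, mul_assoc, coeff_add, coeff_C_mul, coeff_X_mul,
    coeff_X_pow_mul]

theorem natDegree_lucasV_shift_le (a c κ : R) (n : ℕ) :
    (lucasV (shiftSumPoly a c) (shiftProdPoly a c κ) n).natDegree ≤ n :=
  natDegree_lucasV_le (by unfold shiftSumPoly; compute_degree)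
    (by unfold shiftProdPoly; compute_degree) n

theorem coeff_lucasV_shift_eq_zero_of_lt (a c κ : R) {n m : ℕ} (h : n < m) :
    (lucasV (shiftSumPoly a c) (shiftProdPoly a c κ) n).coeff m = 0 :=
  coeff_eq_zero_of_natDegree_lt ((natDegree_lucasV_shift_le a c κ n).trans_lt h)

theorem coeff_lucasV_shift_self {α : ℕ → R} (hα₀ : α 0 = 1)
    (hα : ∀ n, α (n + 2) = 2 * α 1 * α (n + 1) - α n) (c κ : R) (n : ℕ) :
    (lucasV (shiftSumPoly (α 1) c) (shiftProdPoly (α 1) c κ) n).coeff n = 2 * α n := by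
  induction n using Nat.twoStepInduction with
  | zero => simp [lucasV, hα₀]
  | one => rw [lucasV, coeff_shiftSumPoly_one]
  | more n ih₀ ih₁ =>
    rw [lucasV, coeff_sub, coeff_shiftSumPoly_mul, coeff_shiftProdPoly_mul, ih₀, ih₁,
      coeff_lucasV_shift_eq_zero_of_lt _ _ _ (by omega : n + 1 < n + 2),
      coeff_lucasV_shift_eq_zero_of_lt _ _ _ (by omega : n < n + 1),
      coeff_lucasV_shift_eq_zero_of_lt _ _ _ (by omega : n < n + 2), hα]
    ring

theorem coeff_lucasV_shift_succ {α : ℕ → R} (hα₀ : α 0 = 1)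
    (hα : ∀ n, α (n + 2) = 2 * α 1 * α (n + 1) - α n) (c κ : R) (n : ℕ) :
    (lucasV (shiftSumPoly (α 1) c) (shiftProdPoly (α 1) c κ) (n + 1)).coeff n =
      2 * (n + 1) * (α n - α (n + 1)) * c := by
  induction n using Nat.twoStepInduction with
  | zero => rw [lucasV, coeff_shiftSumPoly_zero, hα₀]; ring
  | one =>
    rw [lucasV, lucasV, lucasV, ← C_ofNat, coeff_sub, coeff_shiftSumPoly_mul, coeff_mul_C,
      coeff_shiftSumPoly_zero, coeff_shiftSumPoly_one, coeff_shiftProdPoly_one, hα, hα₀]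
    ring
  | more n ih₀ ih₁ =>
    rw [lucasV, coeff_sub, coeff_shiftSumPoly_mul, coeff_shiftProdPoly_mul, ih₀, ih₁,
      coeff_lucasV_shift_eq_zero_of_lt _ _ _ (by omega : n + 1 < n + 2),
      coeff_lucasV_shift_self hα₀ hα, coeff_lucasV_shift_self hα₀ hα]
    push_cast
    linear_combination 2 * (n + 3) * c * hα (n + 1) - 2 * (n + 1) * c * hα n

end TopCoefficients

section Lattice

noncomputable def latticeFn (c1 c2 c3 z : ℂ) : ℂ := c1 * z⁻¹ + c2 * z + c3

theorem latticeX_eq_latticeFn {q : ℝ} (hq : 0 < q) (c1 c2 c3 : ℂ) (s : ℝ) :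
    latticeX q c1 c2 c3 s = latticeFn c1 c2 c3 ((q ^ s : ℝ) : ℂ) := by
  rw [latticeX, latticeFn, Complex.cpow_neg, ← Complex.ofReal_cpow hq.le]

theorem latticeFn_injOn {c1 c2 : ℂ} (hc : ¬(c1 = 0 ∧ c2 = 0)) (c3 : ℂ) :
    Set.InjOn (fun u : ℝ => latticeFn c1 c2 c3 u) (Set.Ioi √‖c1 / c2‖) := by
  intro u hu v hv huv
  have hM := Real.sqrt_nonneg ‖c1 / c2‖
  have hu0 : (u : ℂ) ≠ 0 := by exact_mod_cast (hM.trans_lt hu).ne'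
  have hv0 : (v : ℂ) ≠ 0 := by exact_mod_cast (hM.trans_lt hv).ne'
  -- For `u ≠ v` this forces `c2 u v = c1`, impossible once `u v > ‖c1 / c2‖`
  -- (when `c2 = 0`, `‖c1 / c2‖ = 0` and the conclusion is `c1 = 0`).
  have hfactor : ((u : ℂ) - v) * (c2 * u * v - c1) = 0 := by
    simp only [latticeFn] at huv
    field_simp at huv
    linear_combination huv
  rcases mul_eq_zero.1 hfactor with h | h
  · exact_mod_cast sub_eq_zero.1 h
  · have hc2 : c2 ≠ 0 := by
      rintro rfl
      exact hc ⟨by simpa using h, rfl⟩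
    have huv : ‖c1 / c2‖ = u * v := by
      rw [show c1 / c2 = ((u * v : ℝ) : ℂ) by field_simp; push_cast; linear_combination -h,
        Complex.norm_real, Real.norm_of_nonneg (mul_pos (hM.trans_lt hu) (hM.trans_lt hv)).le]
    have := mul_lt_mul'' hu hv hM hM
    rw [Real.mul_self_sqrt (norm_nonneg _), huv] at this
    exact absurd this (lt_irrefl _)

theorem infinite_range_latticeX {q : ℝ} (hq : 0 < q) (hq1 : q ≠ 1) {c1 c2 : ℂ}
    (hc : ¬(c1 = 0 ∧ c2 = 0)) (c3 : ℂ) : (Set.range (latticeX q c1 c2 c3)).Infinite := by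
  refine ((Set.Ioi_infinite _).image (latticeFn_injOn hc c3)).mono ?_
  rintro _ ⟨u, hu, rfl⟩
  have hu0 : 0 < u := (Real.sqrt_nonneg _).trans_lt hu
  exact ⟨Real.logb q u, by rw [latticeX_eq_latticeFn hq, Real.rpow_logb hq hq1 hu0]⟩

theorem eq_of_eval_latticeX_eq {q : ℝ} (hq : 0 < q) (hq1 : q ≠ 1) {c1 c2 : ℂ}
    (hc : ¬(c1 = 0 ∧ c2 = 0)) {c3 : ℂ} {p p' : ℂ[X]}
    (h : ∀ s, p.eval (latticeX q c1 c2 c3 s) = p'.eval (latticeX q c1 c2 c3 s)) : p = p' :=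
  eq_of_infinite_eval_eq p p' ((infinite_range_latticeX hq hq1 hc c3).mono
    (Set.range_subset_iff.2 h))

theorem latticeFn_mul_add_latticeFn_div {z t a : ℂ} (hz : z ≠ 0) (ht : t ≠ 0)
    (ha : 2 * a = t + t⁻¹) (c1 c2 c3 : ℂ) :
    latticeFn c1 c2 c3 (z * t) + latticeFn c1 c2 c3 (z / t) =
      (shiftSumPoly a c3).eval (latticeFn c1 c2 c3 z) := by
  obtain rfl : a = (t + t⁻¹) / 2 := by linear_combination ha / 2
  simp only [shiftSumPoly, latticeFn, eval_add, eval_mul, eval_C, eval_X]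
  field_simp
  ring

theorem latticeFn_mul_mul_latticeFn_div {z t a : ℂ} (hz : z ≠ 0) (ht : t ≠ 0)
    (ha : 2 * a = t + t⁻¹) (c1 c2 c3 : ℂ) :
    latticeFn c1 c2 c3 (z * t) * latticeFn c1 c2 c3 (z / t) =
      (shiftProdPoly a c3 (2 * c3 ^ 2 * (1 - a) + c1 * c2 * (t ^ 2 + t⁻¹ ^ 2 - 2))).eval
        (latticeFn c1 c2 c3 z) := by
  obtain rfl : a = (t + t⁻¹) / 2 := by linear_combination ha / 2
  simp only [shiftProdPoly, latticeFn, eval_add, eval_mul, eval_pow, eval_C, eval_X]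
  field_simp
  ring

theorem alphaSeq_natCast {q : ℝ} (hq : 0 < q) (n : ℕ) :
    alphaSeq q n = (√q ^ n + (√q ^ n)⁻¹) / 2 := by
  rw [alphaSeq, Int.cast_natCast, neg_div, Real.rpow_neg hq.le, Real.sqrt_eq_rpow,
    ← Real.rpow_natCast, ← Real.rpow_mul hq.le]
  ring_nf

theorem alphaSeq_zero (q : ℝ) : alphaSeq q 0 = 1 := by
  norm_num [alphaSeq]

theorem alphaSeq_add_two {q : ℝ} (hq : 0 < q) (n : ℕ) :
    alphaSeq q (n + 2 : ℕ) = 2 * alphaSeq q (1 : ℕ) * alphaSeq q (n + 1 : ℕ) - alphaSeq q n := by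
  have h : √q ≠ 0 := (Real.sqrt_pos.2 hq).ne'
  simp only [alphaSeq_natCast hq]
  field_simp
  ring

theorem exists_eval_lucasV_latticeX {q : ℝ} (hq : 0 < q) (c1 c2 c3 : ℂ) :
    ∃ κ : ℂ, ∀ (n : ℕ) (s : ℝ),
      (lucasV (shiftSumPoly (alphaSeq q (1 : ℕ) : ℂ) c3)
          (shiftProdPoly (alphaSeq q (1 : ℕ) : ℂ) c3 κ) n).eval (latticeX q c1 c2 c3 s) =
        latticeX q c1 c2 c3 (s + 1 / 2) ^ n + latticeX q c1 c2 c3 (s - 1 / 2) ^ n := by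
  have ht : ((√q : ℝ) : ℂ) ≠ 0 := by exact_mod_cast (Real.sqrt_pos.2 hq).ne'
  set t : ℂ := ((√q : ℝ) : ℂ)
  have ha : 2 * (alphaSeq q (1 : ℕ) : ℂ) = t + t⁻¹ := by
    rw [alphaSeq_natCast hq]; push_cast; ring
  refine ⟨2 * c3 ^ 2 * (1 - alphaSeq q (1 : ℕ)) + c1 * c2 * (t ^ 2 + t⁻¹ ^ 2 - 2), fun n s => ?_⟩
  have hz : ((q ^ s : ℝ) : ℂ) ≠ 0 := by exact_mod_cast (Real.rpow_pos_of_pos hq s).ne'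
  have hplus : latticeX q c1 c2 c3 (s + 1 / 2) = latticeFn c1 c2 c3 ((q ^ s : ℝ) * t) := by
    rw [latticeX_eq_latticeFn hq, Real.rpow_add hq, ← Real.sqrt_eq_rpow]; push_cast; rfl
  have hminus : latticeX q c1 c2 c3 (s - 1 / 2) = latticeFn c1 c2 c3 ((q ^ s : ℝ) / t) := by
    rw [latticeX_eq_latticeFn hq, Real.rpow_sub hq, ← Real.sqrt_eq_rpow]; push_cast; rfl
  rw [← coe_evalRingHom, map_lucasV, coe_evalRingHom, latticeX_eq_latticeFn hq,
    hplus, hminus, ← latticeFn_mul_add_latticeFn_div hz ht ha,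
    ← latticeFn_mul_mul_latticeFn_div hz ht ha, lucasV_add_mul]

end Lattice

theorem Sx_monomial_leading_coeffs (q : ℝ) (hq : 0 < q) (hq1 : q ≠ 1)
    (c1 c2 c3 : ℂ) (hc : ¬(c1 = 0 ∧ c2 = 0)) (n : ℕ) (Sf : Polynomial ℂ)
    (hSf : IsSx q c1 c2 c3 (X ^ n) Sf) :
    ∃ r : Polynomial ℂ, r.degree < ((n - 1 : ℕ) : WithBot ℕ) ∧
      Sf = C ((alphaSeq q (n : ℤ) : ℝ) : ℂ) * X ^ n +
        C ((n : ℂ) * (((alphaSeq q ((n : ℤ) - 1) : ℝ) : ℂ) -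
            ((alphaSeq q (n : ℤ) : ℝ) : ℂ)) * c3) * X ^ (n - 1) + r := by
  obtain ⟨κ, hκ⟩ := exists_eval_lucasV_latticeX hq c1 c2 c3
  set α : ℕ → ℂ := fun m => (alphaSeq q m : ℂ)
  have hα₀ : α 0 = 1 := by simp [α, alphaSeq_zero]
  have hα : ∀ m, α (m + 2) = 2 * α 1 * α (m + 1) - α m := fun m => by
    simp only [α, alphaSeq_add_two hq m]
    push_cast
    ring
  have hS : Sf = C 2⁻¹ * lucasV (shiftSumPoly (α 1) c3) (shiftProdPoly (α 1) c3 κ) n :=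
    eq_of_eval_latticeX_eq hq hq1 hc fun s => by
      rw [hSf s, eval_mul, eval_C, hκ]
      simp only [eval_pow, eval_X]
      ring
  cases n with
  | zero =>
    refine ⟨0, by simp, ?_⟩
    rw [hS, lucasV, ← map_ofNat C 2, ← C_mul, inv_mul_cancel₀ two_ne_zero]
    simp [alphaSeq_zero]
  | succ m =>
    obtain ⟨r, hr, hSr⟩ := exists_degree_lt_eq_C_mul_X_pow_add_C_mul_X_pow_add
      (hS ▸ (natDegree_C_mul_le _ _).trans (natDegree_lucasV_shift_le _ _ _ _))
    refine ⟨r, by simpa using hr, ?_⟩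
    rw [hSr, hS, coeff_C_mul, coeff_C_mul, coeff_lucasV_shift_self hα₀ hα,
      coeff_lucasV_shift_succ hα₀ hα]
    simp only [α, Nat.add_sub_cancel, Nat.cast_succ, add_sub_cancel_right]
    congr 4 <;> ring
end

section
/- For all polynomials f and g, S_x(fg) = (D_x f)(D_x g) U₂ + (S_x f)(S_x g), where U₂(z) := (α² - 1)z² + 2β(α+1)z + δ, α := (q^{1/2}+q^{-1/2})/2, β := (1-α)𝔠₃, and δ := (α²-1)(𝔠₃² - 4𝔠₁𝔠₂). -/
/-! At a lattice point `x(s)`, write `x± = x(s ± 1/2)`.  Splitting `f(x₊)g(x₊) + f(x₋)g(x₋)`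
into the product of the differences plus the product of the sums gives
`S_x(fg) = (D_x f)(D_x g) ((x₊ - x₋)/2)² + (S_x f)(S_x g)` at `x(s)`, and with `u = q^s`,
`a = q^{1/2}`, `α = (a + a⁻¹)/2` one checks that `((x₊ - x₋)/2)² = U₂(x(s))`.  Both sides of the
claimed identity are polynomials agreeing on the lattice, which is an infinite set because
`u ↦ 𝔠₁u⁻¹ + 𝔠₂u + 𝔠₃` is injective for large `u`. -/

open Polynomial

lemma mul_add_mul_div_two_eq {K : Type*} [Field K] [CharZero K] (fp fm gp gm Df Dg Δ : K)
    (hf : Df * Δ = fp - fm) (hg : Dg * Δ = gp - gm) :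
    (fp * gp + fm * gm) / 2 = Df * Dg * (Δ / 2) ^ 2 + (fp + fm) / 2 * ((gp + gm) / 2) := by
  linear_combination -(gp - gm) / 4 * hf - Df * Δ / 4 * hg

noncomputable def latticeMap (c1 c2 c3 u : ℂ) : ℂ :=
  c1 * u⁻¹ + c2 * u + c3

noncomputable def U2 (α c1 c2 c3 : ℂ) : ℂ[X] :=
  C (α ^ 2 - 1) * X ^ 2 + C (2 * ((1 - α) * c3) * (α + 1)) * X +
    C ((α ^ 2 - 1) * (c3 ^ 2 - 4 * c1 * c2))

lemma U2_eval_latticeMap (c1 c2 c3 : ℂ) {a u : ℂ} (ha : a ≠ 0) (hu : u ≠ 0) :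
    (U2 ((a + a⁻¹) / 2) c1 c2 c3).eval (latticeMap c1 c2 c3 u) =
      ((latticeMap c1 c2 c3 (u * a) - latticeMap c1 c2 c3 (u * a⁻¹)) / 2) ^ 2 := by
  simp only [U2, latticeMap, eval_add, eval_mul, eval_pow, eval_C, eval_X, mul_inv, inv_inv]
  linear_combination (c1 * c2 * (a⁻¹ ^ 2 + a ^ 2 - 2)) * mul_inv_cancel₀ hu +
    (c1 ^ 2 * u⁻¹ ^ 2 + c2 ^ 2 * u ^ 2 - 2 * c1 * c2) * mul_inv_cancel₀ ha

lemma latticeMap_injOn (c1 c2 c3 : ℂ) (hc : ¬(c1 = 0 ∧ c2 = 0)) :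
    Set.InjOn (fun u : ℝ => latticeMap c1 c2 c3 u) (Set.Ioi (‖c1‖ / ‖c2‖ + 1)) := by
  intro u hu v hv huv
  have hT : 0 ≤ ‖c1‖ / ‖c2‖ := by positivity
  simp only [Set.mem_Ioi] at hu hv
  have hu0 : (u : ℂ) ≠ 0 := by exact_mod_cast (by linarith : u ≠ 0)
  have hv0 : (v : ℂ) ≠ 0 := by exact_mod_cast (by linarith : v ≠ 0)
  have hfac : ((u : ℂ) - v) * (c2 * (u * v : ℝ) - c1) = 0 := by
    simp only [latticeMap] at huv
    field_simp at huv
    push_cast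
    linear_combination huv
  refine sub_eq_zero.mp (Complex.ofReal_injective.eq_iff.mp ?_)
  push_cast
  refine (mul_eq_zero.mp hfac).resolve_right fun h => ?_
  have hc1 : c1 = c2 * (u * v : ℝ) := (sub_eq_zero.mp h).symm
  have hc2 : c2 ≠ 0 := fun h2 => hc ⟨by simp [hc1, h2], h2⟩
  have hnorm : ‖c1‖ = ‖c2‖ * (u * v) := by
    rw [hc1, norm_mul, Complex.norm_real, Real.norm_eq_abs, abs_of_pos (by nlinarith)]
  have hlt : ‖c1‖ / ‖c2‖ < u * v := by nlinarith
  rw [div_lt_iff₀ (norm_pos_iff.mpr hc2)] at hlt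
  linarith

lemma latticeX_eq_latticeMap {q : ℝ} (hq : 0 < q) (c1 c2 c3 : ℂ) (s : ℝ) :
    latticeX q c1 c2 c3 s = latticeMap c1 c2 c3 ((q ^ s : ℝ) : ℂ) := by
  rw [latticeX, latticeMap, Complex.cpow_neg, ← Complex.ofReal_cpow hq.le]

lemma latticeX_add {q : ℝ} (hq : 0 < q) (c1 c2 c3 : ℂ) (s t : ℝ) :
    latticeX q c1 c2 c3 (s + t) = latticeMap c1 c2 c3 ((q ^ s : ℝ) * (q ^ t : ℝ)) := by
  rw [latticeX_eq_latticeMap hq, Real.rpow_add hq, Complex.ofReal_mul]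

lemma latticeX_range_infinite {q : ℝ} (hq : 0 < q) (hq1 : q ≠ 1) (c1 c2 c3 : ℂ)
    (hc : ¬(c1 = 0 ∧ c2 = 0)) : (Set.range (latticeX q c1 c2 c3)).Infinite := by
  refine ((Set.Ioi_infinite _).image (latticeMap_injOn c1 c2 c3 hc)).mono ?_
  rintro _ ⟨u, hu, rfl⟩
  have hu0 : 0 < u := lt_trans (by positivity) hu
  exact ⟨Real.logb q u, by rw [latticeX_eq_latticeMap hq, Real.rpow_logb hq hq1 hu0]⟩

lemma alphaSeq_one {q : ℝ} (hq : 0 < q) :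
    alphaSeq q 1 = (q ^ (1 / 2 : ℝ) + (q ^ (1 / 2 : ℝ))⁻¹) / 2 := by
  rw [alphaSeq, Int.cast_one, neg_div, Real.rpow_neg hq.le]

lemma U2_alphaSeq_eval_latticeX {q : ℝ} (hq : 0 < q) (c1 c2 c3 : ℂ) (s : ℝ) :
    (U2 (alphaSeq q 1) c1 c2 c3).eval (latticeX q c1 c2 c3 s) =
      ((latticeX q c1 c2 c3 (s + 1 / 2) - latticeX q c1 c2 c3 (s - 1 / 2)) / 2) ^ 2 := by
  set a : ℝ := q ^ (1 / 2 : ℝ)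
  have ha : (a : ℂ) ≠ 0 := by exact_mod_cast (Real.rpow_pos_of_pos hq _).ne'
  have hu : ((q ^ s : ℝ) : ℂ) ≠ 0 := by exact_mod_cast (Real.rpow_pos_of_pos hq _).ne'
  have hα : ((alphaSeq q 1 : ℝ) : ℂ) = ((a : ℂ) + (a : ℂ)⁻¹) / 2 := by
    rw [alphaSeq_one hq]; push_cast; rfl
  have hxm : latticeX q c1 c2 c3 (s - 1 / 2) = latticeMap c1 c2 c3 ((q ^ s : ℝ) * (a : ℂ)⁻¹) := by
    rw [sub_eq_add_neg, latticeX_add hq, Real.rpow_neg hq.le]; push_cast; rfl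
  rw [hα, hxm, latticeX_add hq, latticeX_eq_latticeMap hq]
  exact U2_eval_latticeMap c1 c2 c3 ha hu

theorem Sx_product_rule (q : ℝ) (hq : 0 < q) (hq1 : q ≠ 1)
    (c1 c2 c3 : ℂ) (hc : ¬(c1 = 0 ∧ c2 = 0))
    (f g Df Sf Dg Sg Sfg : Polynomial ℂ)
    (hDf : IsDx q c1 c2 c3 f Df) (hSf : IsSx q c1 c2 c3 f Sf)
    (hDg : IsDx q c1 c2 c3 g Dg) (hSg : IsSx q c1 c2 c3 g Sg)
    (hSfg : IsSx q c1 c2 c3 (f * g) Sfg) :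
    Sfg = Df * Dg *
        (C ((((alphaSeq q 1 : ℝ) : ℂ)) ^ 2 - 1) * X ^ 2 +
          C (2 * ((1 - ((alphaSeq q 1 : ℝ) : ℂ)) * c3) * (((alphaSeq q 1 : ℝ) : ℂ) + 1)) * X +
          C ((((alphaSeq q 1 : ℝ) : ℂ) ^ 2 - 1) * (c3 ^ 2 - 4 * c1 * c2))) +
      Sf * Sg := by
  change Sfg = Df * Dg * U2 (alphaSeq q 1) c1 c2 c3 + Sf * Sg
  refine eq_of_infinite_eval_eq _ _ ((latticeX_range_infinite hq hq1 c1 c2 c3 hc).mono ?_)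
  rintro _ ⟨s, rfl⟩
  have key := mul_add_mul_div_two_eq _ _ _ _ _ _ _ (hDf s) (hDg s)
  rw [← hSf s, ← hSg s, ← eval_mul, ← eval_mul, ← hSfg s,
    ← U2_alphaSeq_eval_latticeX hq] at key
  simpa only [Set.mem_ofPred_eq, eval_add, eval_mul] using key
end

section
/- For every polynomial f and every nonnegative integer n, D_x^n S_x f = α_n S_x D_x^n f + γ_n U₁ D_x^{n+1} f, where α_n := (q^{n/2}+q^{-n/2})/2, γ_n := (q^{n/2}-q^{-n/2})/(q^{1/2}-q^{-1/2}), and U₁(z) := (α²-1)z + β(α+1). -/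
open Polynomial

namespace DxAux

noncomputable def uu (q : ℝ) (s : ℝ) : ℂ := ((q ^ s : ℝ) : ℂ)
noncomputable def kk (q : ℝ) : ℂ := ((q ^ ((1:ℝ)/2) : ℝ) : ℂ)

variable {q : ℝ} {c1 c2 c3 : ℂ}

lemma uu_ne_zero (hq : 0 < q) (s : ℝ) : uu q s ≠ 0 := by
  unfold uu; exact_mod_cast (Real.rpow_pos_of_pos hq s).ne'

lemma kk_ne_zero (hq : 0 < q) : kk q ≠ 0 := uu_ne_zero hq _

lemma uu_add (hq : 0 < q) (s t : ℝ) : uu q (s + t) = uu q s * uu q t := by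
  unfold uu; rw [Real.rpow_add hq]; push_cast; ring

lemma uu_half : uu q (1/2) = kk q := by norm_num [uu, kk]

lemma uu_neg (hq : 0 < q) (s : ℝ) : uu q (-s) = (uu q s)⁻¹ := by
  unfold uu; rw [Real.rpow_neg hq.le]; push_cast; ring

lemma uu_neg_half (hq : 0 < q) : uu q (-(1/2)) = (kk q)⁻¹ := by
  rw [uu_neg hq, uu_half]

lemma kk_sq (hq : 0 < q) : kk q ^ 2 = (q : ℂ) := by
  unfold kk
  have : (q ^ ((1:ℝ)/2) : ℝ) ^ 2 = q := by
    rw [← Real.rpow_natCast (q ^ ((1:ℝ)/2)) 2, ← Real.rpow_mul hq.le]; norm_num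
  exact_mod_cast congrArg (fun x : ℝ => (x : ℂ)) this

lemma uu_one (hq : 0 < q) : uu q 1 = kk q ^ 2 := by
  rw [kk_sq hq]; unfold uu; norm_num

lemma kk_sq_ne_one (hq : 0 < q) (hq1 : q ≠ 1) : kk q ^ 2 ≠ 1 := by
  rw [kk_sq hq]; exact_mod_cast hq1

lemma uu_inj (hq : 0 < q) (hq1 : q ≠ 1) : Function.Injective (uu q) := by
  intro a b h
  have h' : q ^ a = q ^ b := by unfold uu at h; exact_mod_cast h
  rw [Real.rpow_def_of_pos hq, Real.rpow_def_of_pos hq] at h'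
  have := Real.exp_injective h'
  have hlog : Real.log q ≠ 0 := Real.log_ne_zero_of_pos_of_ne_one hq hq1
  exact mul_left_cancel₀ hlog this

lemma lattice_eq (hq : 0 < q) (s : ℝ) :
    latticeX q c1 c2 c3 s = c1 * (uu q s)⁻¹ + c2 * uu q s + c3 := by
  unfold latticeX uu
  rw [Complex.ofReal_cpow hq.le, Complex.cpow_neg]

lemma lattice_add (hq : 0 < q) (s t : ℝ) :
    latticeX q c1 c2 c3 (s + t) = c1 * (uu q s * uu q t)⁻¹ + c2 * (uu q s * uu q t) + c3 := by
  rw [lattice_eq hq, uu_add hq]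

end DxAux

namespace DxAux
variable {q : ℝ} {c1 c2 c3 : ℂ}

lemma quad_finite (hq : 0 < q) (hq1 : q ≠ 1) (a b c : ℂ) (h : ¬(a = 0 ∧ c = 0)) :
    {s : ℝ | c * uu q s ^ 2 + b * uu q s + a = 0}.Finite := by
  have hP : (C c * X ^ 2 + C b * X + C a : ℂ[X]) ≠ 0 := by
    intro hP0
    apply h
    constructor
    · have := congrArg (fun p : ℂ[X] => p.coeff 0) hP0
      simpa using this
    · have := congrArg (fun p : ℂ[X] => p.coeff 2) hP0
      simpa using this
  have hfin : {x : ℂ | (C c * X ^ 2 + C b * X + C a : ℂ[X]).IsRoot x}.Finite :=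
    Polynomial.finite_setOf_isRoot hP
  have hsub : {s : ℝ | c * uu q s ^ 2 + b * uu q s + a = 0} ⊆
      uu q ⁻¹' {x : ℂ | (C c * X ^ 2 + C b * X + C a : ℂ[X]).IsRoot x} := by
    intro s hs
    simp only [Set.mem_preimage, Set.mem_setOf_eq, IsRoot, eval_add, eval_mul, eval_C, eval_pow,
      eval_X]
    exact hs
  exact ((hfin.preimage (uu_inj hq hq1).injOn).subset hsub)

lemma fiber_finite (hq : 0 < q) (hq1 : q ≠ 1) (hc : ¬(c1 = 0 ∧ c2 = 0)) (v : ℂ) :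
    {s : ℝ | latticeX q c1 c2 c3 s = v}.Finite := by
  refine (quad_finite hq hq1 c1 (c3 - v) c2 hc).subset ?_
  intro s hs
  simp only [Set.mem_setOf_eq] at hs ⊢
  rw [lattice_eq hq] at hs
  have hu := uu_ne_zero hq s
  field_simp at hs ⊢
  linear_combination hs

lemma delta_finite (hq : 0 < q) (hq1 : q ≠ 1) (hc : ¬(c1 = 0 ∧ c2 = 0)) :
    {s : ℝ | latticeX q c1 c2 c3 (s + 1/2) = latticeX q c1 c2 c3 (s - 1/2)}.Finite := by
  refine (quad_finite hq hq1 (-c1) 0 c2 (by simp; tauto)).subset ?_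
  intro s hs
  simp only [Set.mem_setOf_eq] at hs ⊢
  rw [lattice_add hq, show s - 1/2 = s + (-(1/2)) by ring, lattice_add hq, uu_half,
    uu_neg_half hq] at hs
  have hu := uu_ne_zero hq s
  have hk := kk_ne_zero hq
  have hk2 := kk_sq_ne_one hq hq1
  have h2 : kk q ^ 2 - 1 ≠ 0 := sub_ne_zero.mpr hk2
  field_simp at hs
  have h3 : (c2 * uu q s ^ 2 - c1) * (kk q ^ 2 - 1) = 0 := by linear_combination hs
  have key : c2 * uu q s ^ 2 - c1 = 0 := (mul_eq_zero.mp h3).resolve_right h2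
  linear_combination key

lemma ext_lemma (hq : 0 < q) (hq1 : q ≠ 1) (hc : ¬(c1 = 0 ∧ c2 = 0))
    (B : Set ℝ) (hB : B.Finite) (p r : ℂ[X])
    (h : ∀ s ∉ B, p.eval (latticeX q c1 c2 c3 s) = r.eval (latticeX q c1 c2 c3 s)) : p = r := by
  by_contra hne
  have hpr : p - r ≠ 0 := sub_ne_zero.mpr hne
  have hroots : {z : ℂ | (p - r).IsRoot z}.Finite := Polynomial.finite_setOf_isRoot hpr
  have hsub : (Bᶜ : Set ℝ) ⊆ ⋃ z ∈ {z : ℂ | (p - r).IsRoot z}, {s : ℝ | latticeX q c1 c2 c3 s = z} := by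
    intro s hs
    simp only [Set.mem_iUnion, Set.mem_setOf_eq]
    exact ⟨latticeX q c1 c2 c3 s, by simp [IsRoot, h s hs], rfl⟩
  have hfin : (Bᶜ : Set ℝ).Finite :=
    (hroots.biUnion fun z _ => fiber_finite hq hq1 hc z).subset hsub
  exact hB.infinite_compl hfin

end DxAux


namespace DxAux
variable {q : ℝ} {c1 c2 c3 : ℂ}

noncomputable def alC (q : ℝ) : ℂ := ((alphaSeq q 1 : ℝ) : ℂ)

lemma alC_eq (hq : 0 < q) : alC q = (kk q + (kk q)⁻¹) / 2 := by
  unfold alC alphaSeq kk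
  rw [show (-((1:ℤ):ℝ)/2 : ℝ) = -((1:ℝ)/2) by norm_num, Real.rpow_neg hq.le]
  push_cast
  norm_num

lemma lattice_p (hq : 0 < q) (s : ℝ) : latticeX q c1 c2 c3 (s + 1/2)
    = c1 * ((uu q s)⁻¹ * (kk q)⁻¹) + c2 * (uu q s * kk q) + c3 := by
  rw [lattice_add hq s (1/2), uu_half, mul_inv]

lemma lattice_m (hq : 0 < q) (s : ℝ) : latticeX q c1 c2 c3 (s - 1/2)
    = c1 * ((uu q s)⁻¹ * kk q) + c2 * (uu q s * (kk q)⁻¹) + c3 := by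
  rw [show s - 1/2 = s + (-(1/2)) by ring, lattice_add hq s (-(1/2)), uu_neg_half hq, mul_inv,
    inv_inv]

lemma lattice_pp (hq : 0 < q) (s : ℝ) : latticeX q c1 c2 c3 (s + 1)
    = c1 * ((uu q s)⁻¹ * ((kk q)⁻¹ * (kk q)⁻¹)) + c2 * (uu q s * (kk q * kk q)) + c3 := by
  rw [lattice_add hq s 1, uu_one hq, mul_inv, sq, mul_inv]

lemma lattice_mm (hq : 0 < q) (s : ℝ) : latticeX q c1 c2 c3 (s - 1)
    = c1 * ((uu q s)⁻¹ * (kk q * kk q)) + c2 * (uu q s * ((kk q)⁻¹ * (kk q)⁻¹)) + c3 := by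
  rw [show s - 1 = s + (-1) by ring, lattice_add hq s (-1),
    show uu q (-1) = (kk q * kk q)⁻¹ by rw [uu_neg hq, uu_one hq, sq], mul_inv, inv_inv, mul_inv]

lemma keyI (hq : 0 < q) (s : ℝ) :
    latticeX q c1 c2 c3 (s + 1) - latticeX q c1 c2 c3 s
      = alC q * (latticeX q c1 c2 c3 (s + 1/2) - latticeX q c1 c2 c3 (s - 1/2))
        + 2 * ((alC q ^ 2 - 1) * latticeX q c1 c2 c3 s + (1 - alC q) * c3 * (alC q + 1)) := by
  have hk : kk q * (kk q)⁻¹ = 1 := mul_inv_cancel₀ (kk_ne_zero hq)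
  rw [lattice_pp hq, lattice_p hq, lattice_m hq, lattice_eq hq s, alC_eq hq]
  linear_combination (-(c2 * uu q s) - c1 * (uu q s)⁻¹) * hk

lemma keyII (hq : 0 < q) (s : ℝ) :
    latticeX q c1 c2 c3 s - latticeX q c1 c2 c3 (s - 1)
      = alC q * (latticeX q c1 c2 c3 (s + 1/2) - latticeX q c1 c2 c3 (s - 1/2))
        - 2 * ((alC q ^ 2 - 1) * latticeX q c1 c2 c3 s + (1 - alC q) * c3 * (alC q + 1)) := by
  have hk : kk q * (kk q)⁻¹ = 1 := mul_inv_cancel₀ (kk_ne_zero hq)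
  rw [lattice_mm hq, lattice_p hq, lattice_m hq, lattice_eq hq s, alC_eq hq]
  linear_combination (c2 * uu q s + c1 * (uu q s)⁻¹) * hk

lemma keyIII (hq : 0 < q) (s : ℝ) :
    (alC q ^ 2 - 1) * latticeX q c1 c2 c3 (s + 1/2) + (1 - alC q) * c3 * (alC q + 1)
      = alC q * ((alC q ^ 2 - 1) * latticeX q c1 c2 c3 s + (1 - alC q) * c3 * (alC q + 1))
        + (alC q ^ 2 - 1) * (latticeX q c1 c2 c3 (s + 1/2) - latticeX q c1 c2 c3 (s - 1/2)) / 2 := by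
  rw [lattice_p hq, lattice_m hq, lattice_eq hq s, alC_eq hq]
  ring

lemma keyIV (hq : 0 < q) (s : ℝ) :
    (alC q ^ 2 - 1) * latticeX q c1 c2 c3 (s - 1/2) + (1 - alC q) * c3 * (alC q + 1)
      = alC q * ((alC q ^ 2 - 1) * latticeX q c1 c2 c3 s + (1 - alC q) * c3 * (alC q + 1))
        - (alC q ^ 2 - 1) * (latticeX q c1 c2 c3 (s + 1/2) - latticeX q c1 c2 c3 (s - 1/2)) / 2 := by
  rw [lattice_p hq, lattice_m hq, lattice_eq hq s, alC_eq hq]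
  ring

end DxAux



namespace DxAux
variable {q : ℝ} {c1 c2 c3 : ℂ} {Dop Sop : Polynomial ℂ → Polynomial ℂ}

noncomputable def Upoly (q : ℝ) (c3 : ℂ) : Polynomial ℂ :=
  C (alC q ^ 2 - 1) * X + C ((1 - alC q) * c3 * (alC q + 1))

lemma stepA (hq : 0 < q) (hq1 : q ≠ 1) (hc : ¬(c1 = 0 ∧ c2 = 0))
    (hD : ∀ f : Polynomial ℂ, IsDx q c1 c2 c3 f (Dop f))
    (hS : ∀ f : Polynomial ℂ, IsSx q c1 c2 c3 f (Sop f)) (g : Polynomial ℂ) :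
    Dop (Sop g) = C (alC q) * Sop (Dop g) + Upoly q c3 * Dop (Dop g) := by
  apply ext_lemma hq hq1 hc _ (delta_finite hq hq1 hc)
  intro s hs
  simp only [Set.mem_setOf_eq] at hs
  have hΔ : latticeX q c1 c2 c3 (s + 1/2) - latticeX q c1 c2 c3 (s - 1/2) ≠ 0 :=
    sub_ne_zero.mpr hs
  have e1 : s + 1/2 + 1/2 = s + 1 := by ring
  have e2 : s + 1/2 - 1/2 = s := by ring
  have e3 : s - 1/2 + 1/2 = s := by ring
  have e4 : s - 1/2 - 1/2 = s - 1 := by ring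
  have h1 := hD (Sop g) s
  have h2 := hS g (s + 1/2); rw [e1, e2] at h2
  have h3 := hS g (s - 1/2); rw [e3, e4] at h3
  have h4 := hS (Dop g) s
  have h5 := hD g (s + 1/2); rw [e1, e2] at h5
  have h6 := hD g (s - 1/2); rw [e3, e4] at h6
  have h7 := hD (Dop g) s
  have kI := keyI (c1 := c1) (c2 := c2) (c3 := c3) hq s
  have kII := keyII (c1 := c1) (c2 := c2) (c3 := c3) hq s
  simp only [Upoly, eval_add, eval_mul, eval_C, eval_X]
  apply mul_right_cancel₀ hΔ
  linear_combination h1 + h2 - h3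
    - (alC q * (latticeX q c1 c2 c3 (s + 1/2) - latticeX q c1 c2 c3 (s - 1/2))) * h4
    - ((alC q ^ 2 - 1) * latticeX q c1 c2 c3 s + (1 - alC q) * c3 * (alC q + 1)) * h7
    - (1/2) * h5 - (1/2) * h6
    + ((Dop g).eval (latticeX q c1 c2 c3 (s + 1/2)) / 2) * kI
    + ((Dop g).eval (latticeX q c1 c2 c3 (s - 1/2)) / 2) * kII

lemma stepB (hq : 0 < q) (hq1 : q ≠ 1) (hc : ¬(c1 = 0 ∧ c2 = 0))
    (hD : ∀ f : Polynomial ℂ, IsDx q c1 c2 c3 f (Dop f))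
    (hS : ∀ f : Polynomial ℂ, IsSx q c1 c2 c3 f (Sop f)) (g : Polynomial ℂ) :
    Dop (Upoly q c3 * Dop g)
      = C (alC q ^ 2 - 1) * Sop (Dop g) + C (alC q) * (Upoly q c3 * Dop (Dop g)) := by
  apply ext_lemma hq hq1 hc _ (delta_finite hq hq1 hc)
  intro s hs
  simp only [Set.mem_setOf_eq] at hs
  have hΔ : latticeX q c1 c2 c3 (s + 1/2) - latticeX q c1 c2 c3 (s - 1/2) ≠ 0 :=
    sub_ne_zero.mpr hs
  have h1 := hD (Upoly q c3 * Dop g) s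
  have h4 := hS (Dop g) s
  have h7 := hD (Dop g) s
  have kIII := keyIII (c1 := c1) (c2 := c2) (c3 := c3) hq s
  have kIV := keyIV (c1 := c1) (c2 := c2) (c3 := c3) hq s
  simp only [Upoly, eval_add, eval_mul, eval_C, eval_X] at h1 ⊢
  apply mul_right_cancel₀ hΔ
  linear_combination h1
    - ((alC q ^ 2 - 1) * (latticeX q c1 c2 c3 (s + 1/2) - latticeX q c1 c2 c3 (s - 1/2))) * h4
    - (alC q * ((alC q ^ 2 - 1) * latticeX q c1 c2 c3 s + (1 - alC q) * c3 * (alC q + 1))) * h7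
    + ((Dop g).eval (latticeX q c1 c2 c3 (s + 1/2))) * kIII
    - ((Dop g).eval (latticeX q c1 c2 c3 (s - 1/2))) * kIV

lemma linD (hq : 0 < q) (hq1 : q ≠ 1) (hc : ¬(c1 = 0 ∧ c2 = 0))
    (hD : ∀ f : Polynomial ℂ, IsDx q c1 c2 c3 f (Dop f))
    (a b : ℂ) (p1 p2 : Polynomial ℂ) :
    Dop (C a * p1 + C b * p2) = C a * Dop p1 + C b * Dop p2 := by
  apply ext_lemma hq hq1 hc _ (delta_finite hq hq1 hc)
  intro s hs
  simp only [Set.mem_setOf_eq] at hs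
  have hΔ : latticeX q c1 c2 c3 (s + 1/2) - latticeX q c1 c2 c3 (s - 1/2) ≠ 0 :=
    sub_ne_zero.mpr hs
  have ha := hD (C a * p1 + C b * p2) s
  have hb := hD p1 s
  have hc' := hD p2 s
  simp only [eval_add, eval_mul, eval_C] at ha ⊢
  apply mul_right_cancel₀ hΔ
  linear_combination ha - a * hb - b * hc'

end DxAux


namespace DxAux
variable {q : ℝ}

lemma Kden (hq : 0 < q) (hq1 : q ≠ 1) : q ^ ((1:ℝ)/2) - (q ^ ((1:ℝ)/2))⁻¹ ≠ 0 := by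
  have hK : (0:ℝ) < q ^ ((1:ℝ)/2) := Real.rpow_pos_of_pos hq _
  have hK2 : (q ^ ((1:ℝ)/2)) ^ 2 = q := by
    rw [← Real.rpow_natCast (q ^ ((1:ℝ)/2)) 2, ← Real.rpow_mul hq.le]; norm_num
  intro h
  have h1 : (q ^ ((1:ℝ)/2)) ^ 2 = 1 := by
    have := sub_eq_zero.mp h
    field_simp at this
    nlinarith [this]
  exact hq1 (by rw [← hK2, h1])

lemma rec_setup (hq : 0 < q) (n : ℕ) :
    (alphaSeq q ((n : ℤ) + 1) = alphaSeq q 1 * alphaSeq q (n : ℤ)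
        + (alphaSeq q 1 ^ 2 - 1) * gammaSeq q (n : ℤ)
      ∧ gammaSeq q ((n : ℤ) + 1) = alphaSeq q 1 * gammaSeq q (n : ℤ) + alphaSeq q (n : ℤ))
    ↔ ((q ^ ((n:ℝ)/2) * (q ^ ((1:ℝ)/2)) + (q ^ ((n:ℝ)/2))⁻¹ * (q ^ ((1:ℝ)/2))⁻¹) / 2
        = (q ^ ((1:ℝ)/2) + (q ^ ((1:ℝ)/2))⁻¹) / 2 * ((q ^ ((n:ℝ)/2) + (q ^ ((n:ℝ)/2))⁻¹) / 2)
          + (((q ^ ((1:ℝ)/2) + (q ^ ((1:ℝ)/2))⁻¹) / 2) ^ 2 - 1) *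
            ((q ^ ((n:ℝ)/2) - (q ^ ((n:ℝ)/2))⁻¹) / (q ^ ((1:ℝ)/2) - (q ^ ((1:ℝ)/2))⁻¹))
      ∧ (q ^ ((n:ℝ)/2) * (q ^ ((1:ℝ)/2)) - (q ^ ((n:ℝ)/2))⁻¹ * (q ^ ((1:ℝ)/2))⁻¹) /
            (q ^ ((1:ℝ)/2) - (q ^ ((1:ℝ)/2))⁻¹)
        = (q ^ ((1:ℝ)/2) + (q ^ ((1:ℝ)/2))⁻¹) / 2 *
            ((q ^ ((n:ℝ)/2) - (q ^ ((n:ℝ)/2))⁻¹) / (q ^ ((1:ℝ)/2) - (q ^ ((1:ℝ)/2))⁻¹))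
          + (q ^ ((n:ℝ)/2) + (q ^ ((n:ℝ)/2))⁻¹) / 2) := by
  unfold alphaSeq gammaSeq
  push_cast
  rw [show (((n:ℝ)+1)/2 : ℝ) = (n:ℝ)/2 + (1:ℝ)/2 by ring,
    show (-((n:ℝ)+1)/2 : ℝ) = -((n:ℝ)/2) + -((1:ℝ)/2) by ring,
    show (-(n:ℝ)/2 : ℝ) = -((n:ℝ)/2) by ring,
    show (-(1:ℝ)/2 : ℝ) = -((1:ℝ)/2) by ring,
    Real.rpow_add hq, Real.rpow_add hq, Real.rpow_neg hq.le, Real.rpow_neg hq.le]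

lemma alpha_gamma_rec (hq : 0 < q) (hq1 : q ≠ 1) (n : ℕ) :
    alphaSeq q ((n : ℤ) + 1) = alphaSeq q 1 * alphaSeq q (n : ℤ)
        + (alphaSeq q 1 ^ 2 - 1) * gammaSeq q (n : ℤ)
      ∧ gammaSeq q ((n : ℤ) + 1) = alphaSeq q 1 * gammaSeq q (n : ℤ) + alphaSeq q (n : ℤ) := by
  rw [rec_setup hq n]
  have hden := Kden hq hq1
  set K := q ^ ((1:ℝ)/2) with hKdef
  set A := q ^ ((n:ℝ)/2) with hAdef
  have hA0 : A ≠ 0 := (Real.rpow_pos_of_pos hq _).ne'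
  have hK0 : K ≠ 0 := (Real.rpow_pos_of_pos hq _).ne'
  have hu : A * A⁻¹ = 1 := mul_inv_cancel₀ hA0
  have hk : K * K⁻¹ = 1 := mul_inv_cancel₀ hK0
  have hj : (K - K⁻¹) * (K - K⁻¹)⁻¹ = 1 := mul_inv_cancel₀ hden
  constructor
  · apply mul_left_cancel₀ hden
    linear_combination (-A⁻¹ + A⁻¹ * K⁻¹ ^ 2 / 4 + A⁻¹ * K * K⁻¹ / 2 + A⁻¹ * K ^ 2 / 4
        + A - A * K⁻¹ ^ 2 / 4 - A * K * K⁻¹ / 2 - A * K ^ 2 / 4) * hj + (A⁻¹ - A) * hk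
  · apply mul_left_cancel₀ hden
    linear_combination ((-(A⁻¹ * K⁻¹) + A⁻¹ * K - A * K⁻¹ + A * K) / 2) * hj

end DxAux

theorem Dx_pow_Sx_commutation (q : ℝ) (hq : 0 < q) (hq1 : q ≠ 1)
    (c1 c2 c3 : ℂ) (hc : ¬(c1 = 0 ∧ c2 = 0))
    (Dop Sop : Polynomial ℂ → Polynomial ℂ)
    (hD : ∀ f : Polynomial ℂ, IsDx q c1 c2 c3 f (Dop f))
    (hS : ∀ f : Polynomial ℂ, IsSx q c1 c2 c3 f (Sop f)) :
    ∀ (f : Polynomial ℂ) (n : ℕ),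
      Dop^[n] (Sop f) =
        C ((alphaSeq q (n : ℤ) : ℝ) : ℂ) * Sop (Dop^[n] f) +
          C ((gammaSeq q (n : ℤ) : ℝ) : ℂ) *
            (C (((alphaSeq q 1 : ℝ) : ℂ) ^ 2 - 1) * X +
              C ((1 - ((alphaSeq q 1 : ℝ) : ℂ)) * c3 * (((alphaSeq q 1 : ℝ) : ℂ) + 1))) *
            Dop^[n + 1] f := by
  intro f n
  have hU : (C (((alphaSeq q 1 : ℝ) : ℂ) ^ 2 - 1) * X +
      C ((1 - ((alphaSeq q 1 : ℝ) : ℂ)) * c3 * (((alphaSeq q 1 : ℝ) : ℂ) + 1))) = DxAux.Upoly q c3 := rfl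
  rw [hU]
  induction n with
  | zero =>
    have ha : alphaSeq q 0 = 1 := by
      simp [alphaSeq]
    have hg : gammaSeq q 0 = 0 := by
      simp [gammaSeq]
    simp [ha, hg]
  | succ n ih =>
    have hg1 : Dop^[n + 1] f = Dop (Dop^[n] f) := Function.iterate_succ_apply' Dop n f
    have hg2 : Dop^[n + 1 + 1] f = Dop (Dop (Dop^[n] f)) := by
      rw [Function.iterate_succ_apply' Dop (n+1) f, hg1]
    rw [Function.iterate_succ_apply' Dop n (Sop f), ih, hg1, hg2,
      mul_assoc (C ((gammaSeq q (n : ℤ) : ℝ) : ℂ)) (DxAux.Upoly q c3) (Dop (Dop^[n] f)),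
      DxAux.linD hq hq1 hc hD _ _ _ _,
      DxAux.stepA hq hq1 hc hD hS (Dop^[n] f), DxAux.stepB hq hq1 hc hD hS (Dop^[n] f)]
    obtain ⟨ra, rg⟩ := DxAux.alpha_gamma_rec hq hq1 n
    have hcast : (((n + 1 : ℕ) : ℤ)) = ((n : ℤ) + 1) := by push_cast; ring
    have ca : ((alphaSeq q ((n + 1 : ℕ) : ℤ) : ℝ) : ℂ)
        = DxAux.alC q * ((alphaSeq q (n : ℤ) : ℝ) : ℂ)
          + (DxAux.alC q ^ 2 - 1) * ((gammaSeq q (n : ℤ) : ℝ) : ℂ) := by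
      rw [hcast, ra]; unfold DxAux.alC; push_cast; ring
    have cg : ((gammaSeq q ((n + 1 : ℕ) : ℤ) : ℝ) : ℂ)
        = DxAux.alC q * ((gammaSeq q (n : ℤ) : ℝ) : ℂ) + ((alphaSeq q (n : ℤ) : ℝ) : ℂ) := by
      rw [hcast, rg]; unfold DxAux.alC; push_cast; ring
    rw [ca, cg]
    simp only [map_add, map_mul, map_sub, map_one, map_pow]
    have halC : C (DxAux.alC q) = C (((alphaSeq q 1 : ℝ) : ℂ)) := rfl
    ring
end
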